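/- Assume every vertex of the graph E has at most one non-neighbour, i.e. for each j ∈ {1,…,d} there is at most one i ≠ j with ¬E i j. Then the commutator subgroup [W(E), W(E)] is a free abelian group, freely generated by the commutators [s_i, s_j] = s_i s_j s_i s_j taken over the unordered pairs {i, j} with i < j and ¬E i j; in particular its rank equals the number of non-adjacent pairs of E. -/

import Mathlib

/-- Relators of the right-angled Coxeter group of the graph `E`:
`s j ^ 2` for every vertex `j`, and `(s i * s j) ^ 2` for every edge `{i, j}` of `E`. -/
def racgRels {d : ℕ} (E : Fin d → Fin d → Prop) : Set (FreeGroup (Fin d)) :=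
  {r | (∃ j : Fin d, r = FreeGroup.of j ^ 2) ∨
    ∃ i j : Fin d, E i j ∧ r = (FreeGroup.of i * FreeGroup.of j) ^ 2}

/-- The right-angled Coxeter group `W(E)` of the graph `E`. -/
abbrev RACG {d : ℕ} (E : Fin d → Fin d → Prop) : Type := PresentedGroup (racgRels E)

/-- The standard generator `s j` of the right-angled Coxeter group `W(E)`. -/
def racgGen {d : ℕ} (E : Fin d → Fin d → Prop) (j : Fin d) : RACG E :=
  PresentedGroup.of j

open scoped commutatorElement

/-!
Since every vertex has at most one non-neighbour, the non-adjacent pairs are pairwise disjoint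
and every vertex outside a non-adjacent pair `{a, b}` is adjacent to both `a` and `b`. Hence the
commutators `⁅s a, s b⁆` of non-adjacent pairs commute with each other, and every generator
conjugates each of them to itself or its inverse, so they generate an abelian normal subgroup `C`.
Modulo `C` all generators commute, so `C = [W, W]`.

They are independent: for a non-adjacent pair `{a, b}`, sending `s a` and `s b` to the
reflections `x ↦ -x` and `x ↦ 1 - x` of `ℤ` and all other generators to `1` defines a
homomorphism to the infinite dihedral group that maps `⁅s a, s b⁆` to the translation by `2` and
kills the commutators of all other non-adjacent pairs.
-/

section GroupLemmas

open Set Subgroup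

variable {G : Type*} [Group G]

theorem Commute.commutatorElement_right {a x y : G} (hx : Commute a x) (hy : Commute a y) :
    Commute a ⁅x, y⁆ := by
  rw [commutatorElement_def]
  exact ((hx.mul_right hy).mul_right hx.inv_right).mul_right hy.inv_right

theorem Subgroup.normal_closure_of_conj_mem {S T : Set G} (hT : closure T = ⊤)
    (hTinv : ∀ t ∈ T, t⁻¹ ∈ T)
    (hST : ∀ t ∈ T, ∀ s ∈ S, t * s * t⁻¹ ∈ closure S) :
    (closure S).Normal := by
  rw [← normalizer_eq_top_iff, eq_top_iff, ← hT, closure_le]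
  intro t ht
  rw [SetLike.mem_coe, mem_normalizer_iff_map_conj_eq, MonoidHom.map_closure]
  refine le_antisymm ((closure_le _).2 ?_) ((closure_le _).2 fun s hs => ?_)
  · rintro _ ⟨s, hs, rfl⟩
    exact hST t ht s hs
  · rw [← MonoidHom.map_closure]
    refine ⟨_, hST t⁻¹ (hTinv t ht) s hs, ?_⟩
    simp [mul_assoc]

theorem Subgroup.commutator_le_of_commutatorElement_mem {S : Set G} (hS : closure S = ⊤)
    {N : Subgroup G} [N.Normal] (hSN : ∀ x ∈ S, ∀ y ∈ S, ⁅x, y⁆ ∈ N) :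
    _root_.commutator G ≤ N := by
  let π := QuotientGroup.mk' N
  have hπS : closure (π '' S) = ⊤ := by
    rw [← MonoidHom.map_closure, hS, map_top_of_surjective _ (QuotientGroup.mk'_surjective N)]
  have : IsMulCommutative (closure (π '' S)) := isMulCommutative_closure (by
    rintro _ ⟨x, hx, rfl⟩ _ ⟨y, hy, rfl⟩
    rw [← commutatorElement_eq_one_iff_mul_comm, ← map_commutatorElement,
      QuotientGroup.mk'_apply, QuotientGroup.eq_one_iff]
    exact hSN x hx y hy)
  rw [← Normal.quotient_commutative_iff_commutator_le]
  exact ⟨⟨fun a b => setLike_mul_comm (hπS ▸ mem_top a) (hπS ▸ mem_top b)⟩⟩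

variable {ι : Type*}

open scoped IsMulCommutative in
noncomputable def finsuppZPowersHom (g : ι → G) (hg : ∀ i j, Commute (g i) (g j)) :
    Multiplicative (ι →₀ ℤ) →* G :=
  haveI : IsMulCommutative (closure (range g)) :=
    isMulCommutative_closure (by rintro _ ⟨i, rfl⟩ _ ⟨j, rfl⟩; exact hg i j)
  (closure (range g)).subtype.comp <| AddMonoidHom.toMultiplicativeLeft <|
    Finsupp.liftAddHom fun i =>
      zmultiplesHom _ (Additive.ofMul ⟨g i, subset_closure ⟨i, rfl⟩⟩)

theorem finsuppZPowersHom_single (g : ι → G) (hg : ∀ i j, Commute (g i) (g j)) (i : ι)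
    (n : ℤ) :
    finsuppZPowersHom g hg (.ofAdd (Finsupp.single i n)) = g i ^ n := by
  simp [finsuppZPowersHom]

theorem range_finsuppZPowersHom (g : ι → G) (hg : ∀ i j, Commute (g i) (g j)) :
    (finsuppZPowersHom g hg).range = closure (range g) := by
  refine le_antisymm ?_ ((closure_le _).2 ?_)
  · rintro _ ⟨f, rfl⟩
    exact Subtype.property _
  · rintro _ ⟨i, rfl⟩
    exact ⟨_, (finsuppZPowersHom_single g hg i 1).trans (zpow_one _)⟩

end GroupLemmas

section RightAngledCoxeter

open Set Subgroup

variable {d : ℕ} {E : Fin d → Fin d → Prop}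

theorem racgGen_mul_self (j : Fin d) : racgGen E j * racgGen E j = 1 := by
  simpa [sq, racgGen, PresentedGroup.of] using
    PresentedGroup.one_of_mem (rels := racgRels E) (Or.inl ⟨j, rfl⟩)

theorem racgGen_inv (j : Fin d) : (racgGen E j)⁻¹ = racgGen E j :=
  inv_eq_of_mul_eq_one_right (racgGen_mul_self j)

theorem racgGen_mul_racgGen_mul (j : Fin d) (x : RACG E) :
    racgGen E j * (racgGen E j * x) = x := by
  rw [← mul_assoc, racgGen_mul_self, one_mul]

theorem commute_racgGen {i j : Fin d} (hij : E i j) : Commute (racgGen E i) (racgGen E j) := by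
  have hsq : racgGen E i * racgGen E j * (racgGen E i * racgGen E j) = 1 := by
    simpa [sq, racgGen, PresentedGroup.of] using
      PresentedGroup.one_of_mem (rels := racgRels E) (Or.inr ⟨i, j, hij, rfl⟩)
  rw [Commute, SemiconjBy, eq_inv_of_mul_eq_one_left hsq, mul_inv_rev, racgGen_inv, racgGen_inv]

theorem closure_range_racgGen : closure (range (racgGen E)) = ⊤ :=
  PresentedGroup.closure_range_of _

def racgLift {G : Type*} [Group G] (f : Fin d → G) (hf : ∀ j, f j * f j = 1)
    (hfE : ∀ i j, E i j → Commute (f i) (f j)) : RACG E →* G :=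
  PresentedGroup.toGroup (rels := racgRels E) (f := f) (by
    rintro _ (⟨j, rfl⟩ | ⟨i, j, hij, rfl⟩)
    · simp [sq, hf]
    · simp only [map_mul, FreeGroup.lift_apply_of, sq]
      rw [(hfE i j hij).symm.mul_mul_mul_comm, hf, hf, one_mul])

theorem racgLift_racgGen {G : Type*} [Group G] (f : Fin d → G) (hf : ∀ j, f j * f j = 1)
    (hfE : ∀ i j, E i j → Commute (f i) (f j)) (j : Fin d) :
    racgLift f hf hfE (racgGen E j) = f j :=
  PresentedGroup.toGroup.of _

end RightAngledCoxeter

section NonAdjacentPairs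

variable {d : ℕ} {E : Fin d → Fin d → Prop}

def AtMostOneNonNeighbour (E : Fin d → Fin d → Prop) : Prop :=
  ∀ j i k : Fin d, i ≠ j → k ≠ j → ¬ E i j → ¬ E k j → i = k

abbrev NonAdjPair (E : Fin d → Fin d → Prop) : Type :=
  {p : Fin d × Fin d // p.1 < p.2 ∧ ¬ E p.1 p.2}

def pairCommutator (E : Fin d → Fin d → Prop) (p : NonAdjPair E) : RACG E :=
  ⁅racgGen E p.1.1, racgGen E p.1.2⁆

theorem adj_of_not_adj (huniq : AtMostOneNonNeighbour E) {a b k : Fin d} (hab : a ≠ b)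
    (hba : ¬ E b a) (hka : k ≠ a) (hkb : k ≠ b) : E k a := by
  by_contra hk
  exact hkb (huniq a k b hka hab.symm hk hba)

namespace NonAdjPair

theorem not_adj_snd_fst (hsymm : ∀ i j, E i j → E j i) (p : NonAdjPair E) : ¬ E p.1.2 p.1.1 :=
  fun h => p.2.2 (hsymm _ _ h)

theorem adj_of_ne (hsymm : ∀ i j, E i j → E j i) (huniq : AtMostOneNonNeighbour E)
    (p : NonAdjPair E) {k : Fin d} (h₁ : k ≠ p.1.1) (h₂ : k ≠ p.1.2) :
    E k p.1.1 ∧ E k p.1.2 :=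
  ⟨adj_of_not_adj huniq p.2.1.ne (p.not_adj_snd_fst hsymm) h₁ h₂,
    adj_of_not_adj huniq p.2.1.ne' p.2.2 h₂ h₁⟩

theorem eq_of_mem_of_mem (hsymm : ∀ i j, E i j → E j i) (huniq : AtMostOneNonNeighbour E)
    {p q : NonAdjPair E} {v : Fin d}
    (hp : v = p.1.1 ∨ v = p.1.2) (hq : v = q.1.1 ∨ v = q.1.2) : p = q := by
  have hp' := p.not_adj_snd_fst hsymm
  have hq' := q.not_adj_snd_fst hsymm
  obtain ⟨⟨a, b⟩, hab, hE⟩ := p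
  obtain ⟨⟨a', b'⟩, hab', hE'⟩ := q
  dsimp only at hp hq hp' hq' hab hab' hE hE'
  rcases hp with rfl | rfl <;> rcases hq with h | h <;> subst h
  · obtain rfl := huniq _ _ _ hab.ne' hab'.ne' hp' hq'
    rfl
  · obtain rfl := huniq _ _ _ hab.ne' hab'.ne hp' hE'
    exact absurd (hab'.trans hab) (lt_irrefl _)
  · obtain rfl := huniq _ _ _ hab.ne hab'.ne' hE hq'
    exact absurd (hab.trans hab') (lt_irrefl _)
  · obtain rfl := huniq _ _ _ hab.ne hab'.ne hE hE'
    rfl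

theorem ne_of_mem_of_ne (hsymm : ∀ i j, E i j → E j i) (huniq : AtMostOneNonNeighbour E)
    {p q : NonAdjPair E} (hpq : p ≠ q) {v : Fin d} (hq : v = q.1.1 ∨ v = q.1.2) :
    v ≠ p.1.1 ∧ v ≠ p.1.2 :=
  ⟨fun h => hpq (eq_of_mem_of_mem hsymm huniq (.inl h) hq),
    fun h => hpq (eq_of_mem_of_mem hsymm huniq (.inr h) hq)⟩

end NonAdjPair

end NonAdjacentPairs

section PairCommutators

open Set Subgroup

variable {d : ℕ} {E : Fin d → Fin d → Prop}

theorem commute_racgGen_pairCommutator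
    (hsymm : ∀ i j, E i j → E j i) (huniq : AtMostOneNonNeighbour E)
    (p : NonAdjPair E) {k : Fin d} (h₁ : k ≠ p.1.1) (h₂ : k ≠ p.1.2) :
    Commute (racgGen E k) (pairCommutator E p) :=
  have hk := p.adj_of_ne hsymm huniq h₁ h₂
  (commute_racgGen hk.1).commutatorElement_right (commute_racgGen hk.2)

theorem commute_pairCommutator (hsymm : ∀ i j, E i j → E j i) (huniq : AtMostOneNonNeighbour E)
    (p q : NonAdjPair E) : Commute (pairCommutator E p) (pairCommutator E q) := by
  rcases eq_or_ne p q with rfl | hpq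
  · rfl
  have h₁ := p.ne_of_mem_of_ne hsymm huniq hpq (v := q.1.1) (.inl rfl)
  have h₂ := p.ne_of_mem_of_ne hsymm huniq hpq (v := q.1.2) (.inr rfl)
  exact ((commute_racgGen_pairCommutator hsymm huniq p h₁.1 h₁.2).symm.commutatorElement_right
    (commute_racgGen_pairCommutator hsymm huniq p h₂.1 h₂.2).symm)

theorem racgGen_conj_pairCommutator_mem
    (hsymm : ∀ i j, E i j → E j i) (huniq : AtMostOneNonNeighbour E)
    (k : Fin d) (p : NonAdjPair E) :
    racgGen E k * pairCommutator E p * (racgGen E k)⁻¹ ∈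
      closure (range (pairCommutator E)) := by
  have hp : pairCommutator E p ∈ closure (range (pairCommutator E)) := subset_closure ⟨p, rfl⟩
  by_cases hk : k = p.1.1 ∨ k = p.1.2
  · have : racgGen E k * pairCommutator E p * (racgGen E k)⁻¹ = (pairCommutator E p)⁻¹ := by
      rcases hk with rfl | rfl <;>
        simp [pairCommutator, commutatorElement_def, racgGen_inv, mul_assoc, racgGen_mul_self,
          racgGen_mul_racgGen_mul]
    rw [this]
    exact inv_mem hp
  · push Not at hk
    rw [(commute_racgGen_pairCommutator hsymm huniq p hk.1 hk.2).eq, mul_inv_cancel_right]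
    exact hp

theorem normal_closure_range_pairCommutator (hsymm : ∀ i j, E i j → E j i)
    (huniq : AtMostOneNonNeighbour E) : (closure (range (pairCommutator E))).Normal :=
  normal_closure_of_conj_mem closure_range_racgGen
    (by rintro _ ⟨j, rfl⟩; exact ⟨j, (racgGen_inv j).symm⟩)
    (by rintro _ ⟨k, rfl⟩ _ ⟨p, rfl⟩; exact racgGen_conj_pairCommutator_mem hsymm huniq k p)

theorem commutatorElement_racgGen_mem (hsymm : ∀ i j, E i j → E j i) (i j : Fin d) :
    ⁅racgGen E i, racgGen E j⁆ ∈ closure (range (pairCommutator E)) := by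
  by_cases hij : E i j
  · rw [commutatorElement_eq_one_iff_commute.2 (commute_racgGen hij)]
    exact one_mem _
  rcases lt_trichotomy i j with hlt | rfl | hgt
  · exact subset_closure ⟨⟨(i, j), hlt, hij⟩, rfl⟩
  · rw [commutatorElement_self]
    exact one_mem _
  · rw [← commutatorElement_inv]
    exact inv_mem (subset_closure ⟨⟨(j, i), hgt, fun h => hij (hsymm _ _ h)⟩, rfl⟩)

theorem closure_range_pairCommutator (hsymm : ∀ i j, E i j → E j i)
    (huniq : AtMostOneNonNeighbour E) :
    closure (range (pairCommutator E)) = _root_.commutator (RACG E) := by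
  have := normal_closure_range_pairCommutator hsymm huniq
  refine le_antisymm ((closure_le _).2 ?_) (commutator_le_of_commutatorElement_mem
    closure_range_racgGen ?_)
  · rintro _ ⟨p, rfl⟩
    exact commutator_mem_commutator (mem_top _) (mem_top _)
  · rintro _ ⟨i, rfl⟩ _ ⟨j, rfl⟩
    exact commutatorElement_racgGen_mem hsymm i j

end PairCommutators

section DihedralRepresentation

open DihedralGroup

variable {d : ℕ} {E : Fin d → Fin d → Prop}

def dihedralImage (p : NonAdjPair E) (k : Fin d) : DihedralGroup 0 :=
  if k = p.1.1 then sr 0 else if k = p.1.2 then sr 1 else 1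

theorem dihedralImage_mul_self (p : NonAdjPair E) (k : Fin d) :
    dihedralImage p k * dihedralImage p k = 1 := by
  unfold dihedralImage
  split_ifs <;> simp

theorem commute_dihedralImage (hsymm : ∀ i j, E i j → E j i) (p : NonAdjPair E) {i j : Fin d}
    (hij : E i j) : Commute (dihedralImage p i) (dihedralImage p j) := by
  unfold dihedralImage
  split_ifs <;> subst_vars <;> first
    | rfl | exact Commute.one_left _ | exact Commute.one_right _
    | exact absurd hij p.2.2 | exact absurd (hsymm _ _ hij) p.2.2

def toDihedral (hsymm : ∀ i j, E i j → E j i) (p : NonAdjPair E) :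
    RACG E →* DihedralGroup 0 :=
  racgLift (dihedralImage p) (dihedralImage_mul_self p) fun _ _ => commute_dihedralImage hsymm p

theorem toDihedral_pairCommutator_self (hsymm : ∀ i j, E i j → E j i) (p : NonAdjPair E) :
    toDihedral hsymm p (pairCommutator E p) = r 2 := by
  simp [toDihedral, pairCommutator, racgLift_racgGen, dihedralImage, p.2.1.ne',
    commutatorElement_def, sr_mul_sr, one_add_one_eq_two]

theorem toDihedral_pairCommutator_of_ne
    (hsymm : ∀ i j, E i j → E j i) (huniq : AtMostOneNonNeighbour E)
    {p q : NonAdjPair E} (hpq : p ≠ q) : toDihedral hsymm p (pairCommutator E q) = 1 := by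
  have h₁ := p.ne_of_mem_of_ne hsymm huniq hpq (v := q.1.1) (.inl rfl)
  have h₂ := p.ne_of_mem_of_ne hsymm huniq hpq (v := q.1.2) (.inr rfl)
  simp [toDihedral, pairCommutator, racgLift_racgGen, dihedralImage, h₁, h₂]

-- The cast is explicit because `ZMod 0` unfolds to `ℤ`: without it, `2 * f p` would be accepted
-- as an element of `ZMod 0` built with the multiplication of `ℤ`, which blocks rewriting.
theorem toDihedral_finsuppZPowersHom
    (hsymm : ∀ i j, E i j → E j i) (huniq : AtMostOneNonNeighbour E)
    (p : NonAdjPair E) (f : NonAdjPair E →₀ ℤ) :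
    toDihedral hsymm p (finsuppZPowersHom _ (commute_pairCommutator hsymm huniq) (.ofAdd f)) =
      r (Int.cast (2 * f p)) := by
  induction f using Finsupp.induction_linear with
  | zero => simp
  | add f g hf hg =>
    rw [ofAdd_add, map_mul, map_mul, hf, hg, r_mul_r, ← Int.cast_add, Finsupp.add_apply, mul_add]
  | single q n =>
    rw [finsuppZPowersHom_single, map_zpow]
    rcases eq_or_ne p q with rfl | hpq
    · rw [toDihedral_pairCommutator_self, r_zpow, Finsupp.single_eq_same, Int.cast_mul,
        Int.cast_ofNat]
    · rw [toDihedral_pairCommutator_of_ne hsymm huniq hpq, one_zpow, Finsupp.single_eq_of_ne hpq,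
        mul_zero, Int.cast_zero, one_def]

theorem injective_finsuppZPowersHom_pairCommutator (hsymm : ∀ i j, E i j → E j i)
    (huniq : AtMostOneNonNeighbour E) :
    Function.Injective (finsuppZPowersHom _ (commute_pairCommutator hsymm huniq)) := by
  refine (injective_iff_map_eq_one _).2 fun f hf => ?_
  ext p
  have := toDihedral_finsuppZPowersHom hsymm huniq p f.toAdd
  rw [ofAdd_toAdd, hf, map_one, one_def, r.injEq, eq_comm, Int.cast_eq_zero, mul_eq_zero] at this
  exact this.resolve_left two_ne_zero

end DihedralRepresentation

theorem stmt_9_general {d : ℕ} (E : Fin d → Fin d → Prop)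
    (hsymm : ∀ i j, E i j → E j i)
    (h : ∀ j i k : Fin d, i ≠ j → k ≠ j → ¬ E i j → ¬ E k j → i = k) :
    ∃ e : Multiplicative ({p : Fin d × Fin d // p.1 < p.2 ∧ ¬ E p.1 p.2} →₀ ℤ) ≃*
        ↥(commutator (RACG E)),
      ∀ p : {p : Fin d × Fin d // p.1 < p.2 ∧ ¬ E p.1 p.2},
        (e (Multiplicative.ofAdd (Finsupp.single p 1)) : RACG E) =
          ⁅racgGen E p.1.1, racgGen E p.1.2⁆ := by
  have hrange : (finsuppZPowersHom _ (commute_pairCommutator hsymm h)).range =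
      commutator (RACG E) := by
    rw [range_finsuppZPowersHom, closure_range_pairCommutator hsymm h]
  refine ⟨(MonoidHom.ofInjective (injective_finsuppZPowersHom_pairCommutator hsymm h)).trans
    (MulEquiv.subgroupCongr hrange), fun p => ?_⟩
  simp [MonoidHom.ofInjective_apply, finsuppZPowersHom_single, pairCommutator]

/-- If every vertex of `E` has at most one non-neighbour, then `[W(E), W(E)]` is free
abelian, freely generated by the commutators `⁅s i, s j⁆` over the non-adjacent pairs
`i < j` of `E`; in particular its rank is the number of non-adjacent pairs. -/
theorem stmt_9 {d : ℕ} (hd : 1 ≤ d) (E : Fin d → Fin d → Prop)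
    (hsymm : ∀ i j, E i j → E j i) (hirr : ∀ i, ¬ E i i)
    (h : ∀ j i k : Fin d, i ≠ j → k ≠ j → ¬ E i j → ¬ E k j → i = k) :
    ∃ e : Multiplicative ({p : Fin d × Fin d // p.1 < p.2 ∧ ¬ E p.1 p.2} →₀ ℤ) ≃*
        ↥(commutator (RACG E)),
      ∀ p : {p : Fin d × Fin d // p.1 < p.2 ∧ ¬ E p.1 p.2},
        (e (Multiplicative.ofAdd (Finsupp.single p 1)) : RACG E) =
          ⁅racgGen E p.1.1, racgGen E p.1.2⁆ :=
  stmt_9_general E hsymm h
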